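/- Let n be a positive integer, let H be an n×n Hermitian complex matrix whose eigenvalues λ₁, …, λ_n are pairwise distinct, with orthonormal eigenbasis (ψ_j), let R be an n×n complex matrix, let ψ = Σ_j a_j ψ_j ∈ ℂⁿ, and let m ≥ 0 be a natural number. Then, as T → ∞, (1/T)·∫₀ᵀ ⟨ψ, exp(iHt)·Hᵐ·R·exp(−iHt)·ψ⟩ dt converges to Σ_j |a_j|²·λ_jᵐ·⟨ψ_j, R ψ_j⟩. -/

import Mathlib

/-!
Expanding in the eigenbasis, `exp(-iHt) ψ = ∑ₖ aₖ e^{-iλₖt} ψₖ`, and since `H` is Hermitian the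
matrix element equals `∑_{j,k} conj(aⱼ) aₖ λⱼᵐ ⟨ψⱼ, R ψₖ⟩ e^{i(λⱼ-λₖ)t}`. The time average of
`e^{iωt}` over `[0, T]` is `1` for `ω = 0` and `O(1/T)` otherwise, so, the eigenvalues being
distinct, only the diagonal terms `j = k` survive in the limit.
-/

open Matrix Finset Filter NormedSpace

namespace Matrix

variable {n : Type*} [Fintype n]

theorem pow_mulVec_of_mulVec_eq_smul [DecidableEq n] {R : Type*} [CommSemiring R]
    {M : Matrix n n R} {u : n → R} {μ : R} (h : M *ᵥ u = μ • u) (k : ℕ) :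
    (M ^ k) *ᵥ u = μ ^ k • u := by
  induction k with
  | zero => simp
  | succ k ih => rw [pow_succ', ← mulVec_mulVec, ih, mulVec_smul, h, smul_smul, pow_succ]

-- `exp` does not depend on the norm; the operator norm only provides summability of the series.
open scoped Norms.Operator in
theorem exp_mulVec_of_mulVec_eq_smul [DecidableEq n] {𝕂 : Type*} [RCLike 𝕂] {M : Matrix n n 𝕂}
    {u : n → 𝕂} {μ : 𝕂} (h : M *ᵥ u = μ • u) : exp M *ᵥ u = exp μ • u := by
  have hM := (exp_series_hasSum_exp' (𝕂 := 𝕂) M).map (mulVec.addMonoidHomLeft u)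
    (continuous_id.matrix_mulVec continuous_const)
  refine hM.unique ?_
  convert (exp_series_hasSum_exp' (𝕂 := 𝕂) μ).smul_const u using 1
  ext1 k
  change ((k.factorial : 𝕂)⁻¹ • M ^ k) *ᵥ u = _
  rw [smul_mulVec, pow_mulVec_of_mulVec_eq_smul h, smul_smul, smul_eq_mul]

theorem mulVec_sum_smul_of_mulVec_eq_smul {ι R : Type*} [Fintype ι] [CommSemiring R]
    {M : Matrix n n R} {ψ : ι → n → R} {μ : ι → R} (h : ∀ j, M *ᵥ ψ j = μ j • ψ j)
    (c : ι → R) : M *ᵥ ∑ j, c j • ψ j = ∑ j, (c j * μ j) • ψ j := by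
  simp only [mulVec_sum, mulVec_smul, h, smul_smul]

theorem star_dotProduct_mulVec {R : Type*} [CommSemiring R] [StarRing R] (M : Matrix n n R)
    (u w : n → R) :
    star u ⬝ᵥ M *ᵥ w = star (Mᴴ *ᵥ u) ⬝ᵥ w := by
  rw [dotProduct_mulVec, star_mulVec, conjTranspose_conjTranspose]

theorem IsHermitian.conjTranspose_exp_smul [DecidableEq n] {𝕂 : Type*} [RCLike 𝕂] {H : Matrix n n 𝕂}
    (hH : H.IsHermitian) (s : 𝕂) :
    (NormedSpace.exp (s • H))ᴴ = NormedSpace.exp (star s • H) := by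
  rw [← exp_conjTranspose, conjTranspose_smul, hH.eq]

theorem star_sum_smul_dotProduct_sum_smul {ι R : Type*} [Fintype ι] [CommSemiring R] [StarRing R]
    (c d : ι → R) (x y : ι → n → R) :
    star (∑ j, c j • x j) ⬝ᵥ ∑ k, d k • y k
      = ∑ j, ∑ k, star (c j) * d k * (star (x j) ⬝ᵥ y k) := by
  simp only [star_sum, star_smul, sum_dotProduct, dotProduct_sum, smul_dotProduct,
    dotProduct_smul, smul_eq_mul]
  rw [Finset.sum_comm]
  simp only [Finset.mul_sum]
  exact Finset.sum_congr rfl fun j _ => Finset.sum_congr rfl fun k _ => by ring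

theorem IsHermitian.star_dotProduct_heisenberg_mulVec {ι : Type*} [Fintype ι] [DecidableEq n]
    {H : Matrix n n ℂ} (hH : H.IsHermitian) {lam : ι → ℝ} {ψ : ι → n → ℂ}
    (heig : ∀ j, H *ᵥ ψ j = (lam j : ℂ) • ψ j) (R : Matrix n n ℂ) (a : ι → ℂ) (m : ℕ) (t : ℝ) :
    star (∑ j, a j • ψ j) ⬝ᵥ
        (NormedSpace.exp ((Complex.I * t) • H) * H ^ m * R *
          NormedSpace.exp ((-(Complex.I * t)) • H)) *ᵥ ∑ j, a j • ψ j
      = ∑ j, ∑ k, star (a j) * a k * (lam j : ℂ) ^ m * (star (ψ j) ⬝ᵥ R *ᵥ ψ k) *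
          Complex.exp (Complex.I * ((lam j - lam k : ℝ) : ℂ) * t) := by
  set U := NormedSpace.exp ((-(Complex.I * t)) • H)
  have hU : ∀ j, U *ᵥ ψ j = Complex.exp (-(Complex.I * t) * lam j) • ψ j := fun j => by
    rw [Complex.exp_eq_exp_ℂ]
    exact exp_mulVec_of_mulVec_eq_smul (by rw [smul_mulVec, heig, smul_smul])
  have hU_adjoint : (NormedSpace.exp ((Complex.I * t) • H))ᴴ = U := by
    rw [hH.conjTranspose_exp_smul]
    simp [U, Complex.conj_ofReal]
  calc _ = star ((H ^ m) *ᵥ U *ᵥ ∑ j, a j • ψ j) ⬝ᵥ R *ᵥ U *ᵥ ∑ j, a j • ψ j := by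
        rw [← mulVec_mulVec, ← mulVec_mulVec, ← mulVec_mulVec, star_dotProduct_mulVec, hU_adjoint,
          star_dotProduct_mulVec, (hH.pow m).eq]
    _ = star (∑ j, (a j * Complex.exp (-(Complex.I * t) * lam j) * lam j ^ m) • ψ j) ⬝ᵥ
          ∑ k, (a k * Complex.exp (-(Complex.I * t) * lam k)) • R *ᵥ ψ k := by
        rw [mulVec_sum_smul_of_mulVec_eq_smul hU,
          mulVec_sum_smul_of_mulVec_eq_smul fun j => pow_mulVec_of_mulVec_eq_smul (heig j) m]
        simp only [mulVec_sum, mulVec_smul]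
    _ = _ := by
        rw [star_sum_smul_dotProduct_sum_smul]
        refine Finset.sum_congr rfl fun j _ => Finset.sum_congr rfl fun k _ => ?_
        have hphase : star (Complex.exp (-(Complex.I * t) * lam j)) *
            Complex.exp (-(Complex.I * t) * lam k)
            = Complex.exp (Complex.I * ((lam j - lam k : ℝ) : ℂ) * t) := by
          rw [Complex.star_def, ← Complex.exp_conj, ← Complex.exp_add]
          simp only [map_mul, map_neg, Complex.conj_I, Complex.conj_ofReal]
          push_cast
          ring_nf
        have hreal : star (lam j : ℂ) = lam j := Complex.conj_ofReal _
        rw [← hphase, star_mul', star_mul', star_pow, hreal]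
        ring

end Matrix

theorem tendsto_average_integral_exp_I_mul (ω : ℝ) :
    Tendsto (fun T : ℝ => (1 / (T : ℂ)) * ∫ t in (0:ℝ)..T, Complex.exp (Complex.I * ω * t))
      atTop (nhds (if ω = 0 then 1 else 0)) := by
  split_ifs with hω
  · refine tendsto_const_nhds.congr' ?_
    filter_upwards [eventually_ne_atTop 0] with T hT
    simp [hω, hT]
  · have hIω : Complex.I * ω ≠ 0 := by simp [hω]
    have hinv : Tendsto (fun T : ℝ => 1 / (T : ℂ)) atTop (nhds 0) := by
      simpa [Function.comp_def] using
        (Complex.continuous_ofReal.tendsto 0).comp tendsto_inv_atTop_zero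
    refine hinv.zero_mul_isBoundedUnder_le
      ⟨2 / ‖Complex.I * ω‖, eventually_map.2 <| .of_forall fun T => ?_⟩
    have hunit : ∀ s : ℝ, ‖Complex.exp (Complex.I * ω * s)‖ = 1 := fun s => by
      rw [show Complex.I * ω * s = ((ω * s : ℝ) : ℂ) * Complex.I by push_cast; ring]
      exact Complex.norm_exp_ofReal_mul_I _
    change ‖∫ t in (0:ℝ)..T, Complex.exp (Complex.I * ω * t)‖ ≤ 2 / ‖Complex.I * ω‖
    rw [integral_exp_mul_complex hIω, norm_div]
    gcongr
    calc _ ≤ _ + _ := norm_sub_le _ _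
      _ = 2 := by rw [hunit, hunit]; norm_num

theorem tendsto_average_integral_sum_exp {ι : Type*} [Fintype ι] {ω : ι → ℝ}
    (hω : Function.Injective ω) (C : ι → ι → ℂ) :
    Tendsto (fun T : ℝ => (1 / (T : ℂ)) * ∫ t in (0:ℝ)..T,
        ∑ j, ∑ k, C j k * Complex.exp (Complex.I * ((ω j - ω k : ℝ) : ℂ) * t))
      atTop (nhds (∑ j, C j j)) := by
  have hcont : ∀ j k, Continuous fun t : ℝ =>
      C j k * Complex.exp (Complex.I * ((ω j - ω k : ℝ) : ℂ) * t) :=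
    fun j k => by fun_prop
  have hsplit : ∀ T : ℝ, (1 / (T : ℂ)) * ∫ t in (0:ℝ)..T,
        ∑ j, ∑ k, C j k * Complex.exp (Complex.I * ((ω j - ω k : ℝ) : ℂ) * t)
      = ∑ j, ∑ k, C j k * ((1 / (T : ℂ)) *
          ∫ t in (0:ℝ)..T, Complex.exp (Complex.I * ((ω j - ω k : ℝ) : ℂ) * t)) := by
    intro T
    rw [intervalIntegral.integral_finsetSum fun j _ =>
      (continuous_finsetSum _ fun k _ => hcont j k).intervalIntegrable 0 T]
    simp_rw [intervalIntegral.integral_finsetSum fun k _ => (hcont _ k).intervalIntegrable 0 T,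
      intervalIntegral.integral_const_mul, Finset.mul_sum, mul_left_comm]
  have hdiag : ∑ j, C j j = ∑ j, ∑ k, C j k * if ω j - ω k = 0 then 1 else 0 := by
    classical
    simp only [sub_eq_zero, hω.eq_iff, mul_ite, mul_one, mul_zero, Finset.sum_ite_eq,
      Finset.mem_univ, if_true]
  rw [hdiag]
  simp_rw [hsplit]
  exact tendsto_finsetSum _ fun j _ => tendsto_finsetSum _ fun k _ =>
    (tendsto_average_integral_exp_I_mul _).const_mul _

theorem time_average_observable_general (n : ℕ)
    (H : Matrix (Fin n) (Fin n) ℂ) (hH : H.IsHermitian)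
    (lam : Fin n → ℝ) (hdist : Function.Injective lam)
    (ψ : Fin n → (Fin n → ℂ))
    (heig : ∀ j, H.mulVec (ψ j) = (Complex.ofReal (lam j)) • ψ j)
    (R : Matrix (Fin n) (Fin n) ℂ)
    (a : Fin n → ℂ) (v : Fin n → ℂ) (hv : v = ∑ j, a j • ψ j)
    (m : ℕ) :
    Tendsto (fun T : ℝ => (1 / (T : ℂ)) *
        ∫ t in (0:ℝ)..T, star v ⬝ᵥ
          (exp ((Complex.I * t) • H) * H ^ m * R *
            exp ((-(Complex.I * t)) • H)).mulVec v)
      atTop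
      (nhds (∑ j, Complex.ofReal (‖a j‖ ^ 2) * Complex.ofReal (lam j) ^ m *
        (star (ψ j) ⬝ᵥ R.mulVec (ψ j)))) := by
  subst hv
  have hnorm : ∀ j, star (a j) * a j = ((‖a j‖ ^ 2 : ℝ) : ℂ) := fun j => by
    rw [Complex.star_def, Complex.conj_mul']
    push_cast
    rfl
  simp only [hH.star_dotProduct_heisenberg_mulVec heig, ← hnorm]
  exact tendsto_average_integral_sum_exp hdist _

/-- Long-time average of the Heisenberg-evolved observable `Hᵐ R` in the state `ψ`:
`(1/T)∫₀ᵀ ⟨ψ, exp(iHt) Hᵐ R exp(−iHt) ψ⟩ dt → Σ_j |a_j|² λ_jᵐ ⟨ψ_j, R ψ_j⟩`. -/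
theorem time_average_observable (n : ℕ) (hn : 0 < n)
    (H : Matrix (Fin n) (Fin n) ℂ) (hH : H.IsHermitian)
    (lam : Fin n → ℝ) (hdist : Function.Injective lam)
    (ψ : Fin n → (Fin n → ℂ))
    (hon : ∀ j k, star (ψ j) ⬝ᵥ ψ k = if j = k then 1 else 0)
    (heig : ∀ j, H.mulVec (ψ j) = (Complex.ofReal (lam j)) • ψ j)
    (R : Matrix (Fin n) (Fin n) ℂ)
    (a : Fin n → ℂ) (v : Fin n → ℂ) (hv : v = ∑ j, a j • ψ j)
    (m : ℕ) :
    Tendsto (fun T : ℝ => (1 / (T : ℂ)) *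
        ∫ t in (0:ℝ)..T, star v ⬝ᵥ
          (exp ((Complex.I * t) • H) * H ^ m * R *
            exp ((-(Complex.I * t)) • H)).mulVec v)
      atTop
      (nhds (∑ j, Complex.ofReal (‖a j‖ ^ 2) * Complex.ofReal (lam j) ^ m *
        (star (ψ j) ⬝ᵥ R.mulVec (ψ j)))) :=
  time_average_observable_general n H hH lam hdist ψ heig R a v hv m
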